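/- arXiv:1508.07519 — 3 statements merged into one kernel-verified Lean document; each statement's English description precedes it below -/
import Mathlib

section
/- Let Ω be homogeneous of degree zero on ℝⁿ \ {0} with mean value zero on S^{n-1} and Ω ∈ L¹(S^{n-1}). If Ω satisfies the regularity condition sup_{|ξ|=1} ∫_{S^{n-1}} |Ω(θ) − Ω(θ+δξ)| dσ(θ) ≤ C n δ ∫_{S^{n-1}} |Ω(θ)| dσ(θ) for all 0 < δ < 1/n (where C is a constant independent of the dimension, and Ω is evaluated off the sphere via its degree-zero homogeneous extension), then Ω satisfies the L¹-Dini condition. -/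
open MeasureTheory Filter Set

noncomputable section

/-- The unit sphere `S^{n-1}` in `ℝⁿ`. -/
abbrev unitSphere (n : ℕ) := Metric.sphere (0 : EuclideanSpace ℝ (Fin n)) 1

/-- The surface (area) measure `σ` on the unit sphere `S^{n-1}`. -/
def sphereMeasure (n : ℕ) : Measure (unitSphere n) :=
  (volume : Measure (EuclideanSpace ℝ (Fin n))).toSphere

/-- `Ω` is homogeneous of degree zero on `ℝⁿ \ {0}`. -/
def HomogeneousZero {n : ℕ} (Ω : EuclideanSpace ℝ (Fin n) → ℝ) : Prop :=
  ∀ c : ℝ, 0 < c → ∀ x : EuclideanSpace ℝ (Fin n), x ≠ 0 → Ω (c • x) = Ω x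

/-- The `L¹` integral modulus of continuity of `Ω`, defined via rotations:
`ω₁(δ) = sup_{‖ρ‖ ≤ δ} ∫_{S^{n-1}} |Ω(ρθ) - Ω(θ)| dσ(θ)`, where `ρ` ranges over
rotations of `ℝⁿ` (linear isometries of determinant `1`) and
`‖ρ‖ = sup{ |ρx' - x'| : x' ∈ S^{n-1} }`. -/
def omegaRot (n : ℕ) (Ω : EuclideanSpace ℝ (Fin n) → ℝ) (δ : ℝ) : ℝ :=
  sSup {I : ℝ | ∃ ρ : EuclideanSpace ℝ (Fin n) ≃ₗᵢ[ℝ] EuclideanSpace ℝ (Fin n),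
    LinearMap.det (ρ.toLinearEquiv : EuclideanSpace ℝ (Fin n) →ₗ[ℝ] EuclideanSpace ℝ (Fin n)) = 1 ∧
    (∀ x : EuclideanSpace ℝ (Fin n), ‖x‖ = 1 → ‖ρ x - x‖ ≤ δ) ∧
    I = ∫ θ : unitSphere n, |Ω (ρ (θ : EuclideanSpace ℝ (Fin n))) - Ω (θ : EuclideanSpace ℝ (Fin n))| ∂(sphereMeasure n)}

/-- The `L¹` integral modulus of continuity of `Ω`, defined via translations:
`ω̃₁(δ) = sup_{|h| ≤ δ} ∫_{S^{n-1}} |Ω(θ + h) - Ω(θ)| dσ(θ)`, where `Ω` is evaluated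
off the sphere via its degree-zero homogeneous extension. -/
def omegaTrans (n : ℕ) (Ω : EuclideanSpace ℝ (Fin n) → ℝ) (δ : ℝ) : ℝ :=
  sSup {I : ℝ | ∃ h : EuclideanSpace ℝ (Fin n), ‖h‖ ≤ δ ∧
    I = ∫ θ : unitSphere n, |Ω ((θ : EuclideanSpace ℝ (Fin n)) + h) - Ω (θ : EuclideanSpace ℝ (Fin n))| ∂(sphereMeasure n)}

/-- `Ω` satisfies the `L¹`-Dini condition. -/
def L1Dini (n : ℕ) (Ω : EuclideanSpace ℝ (Fin n) → ℝ) : Prop :=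
  Integrable (fun θ : unitSphere n => Ω (θ : EuclideanSpace ℝ (Fin n))) (sphereMeasure n) ∧
  ∫⁻ δ in Ioo (0 : ℝ) 1, ENNReal.ofReal (omegaRot n Ω δ / δ) < ⊤

/-- The truncated singular integral `∫_{|x-y| > ε} Ω(x-y)|x-y|^{-n} dμ(y)` of a signed
measure `μ`, where integration against `μ` is via its Jordan decomposition. -/
def truncT (n : ℕ) (Ω : EuclideanSpace ℝ (Fin n) → ℝ)
    (μ : SignedMeasure (EuclideanSpace ℝ (Fin n))) (x : EuclideanSpace ℝ (Fin n)) (ε : ℝ) : ℝ :=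
  (∫ y in {y | ε < ‖x - y‖}, Ω (x - y) / ‖x - y‖ ^ n ∂μ.toJordanDecomposition.posPart) -
  (∫ y in {y | ε < ‖x - y‖}, Ω (x - y) / ‖x - y‖ ^ n ∂μ.toJordanDecomposition.negPart)

/-- The principal-value singular integral `T_Ω μ(x) = p.v. ∫ Ω(x-y)|x-y|^{-n} dμ(y)`. -/
def TOmega (n : ℕ) (Ω : EuclideanSpace ℝ (Fin n) → ℝ)
    (μ : SignedMeasure (EuclideanSpace ℝ (Fin n))) (x : EuclideanSpace ℝ (Fin n)) : ℝ :=
  limUnder (nhdsWithin (0 : ℝ) (Ioi 0)) (truncT n Ω μ x)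

/-!
Fix a rotation `ρ` with `‖ρθ - θ‖ ≤ δ` on the sphere and average over `h` in the ball of radius
`δ`: `|Ω(ρθ) - Ω(θ)| ≤ |Ω(θ) - Ω(θ + h)| + |Ω(ρθ) - Ω(ρθ + y)|` with `y = θ + h - ρθ`, `‖y‖ ≤ 2δ`.
After integrating in `θ` and `h`, rotation invariance of `σ` and Fubini bound `ω₁(δ)` by
`(1 + 2ⁿ)` times the largest translation difference at scale `2δ`, which the regularity condition
makes `O(δ)`. Together with the trivial bound `ω₁(δ) ≤ 2‖Ω‖₁`, this makes `ω₁(δ)/δ` bounded.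

The translates `θ ↦ Ω(θ + h)` are read through homogeneity as `Ω` at the radial projection of
`θ + h`. For small `h` this projection pushes `σ` forward to at most `2ⁿ⁺¹ σ`: on cones it is
induced by `x ↦ x + ‖x‖ h`, a small Lipschitz perturbation of the identity, which shrinks volumes
by at most a factor `2`. This gives the integrability of the translates (without which the
regularity condition, a bound on Bochner integrals, would say nothing) and their joint
measurability in `(θ, h)`.
-/

open Metric Module
open scoped ENNReal NNReal Pointwise

lemma sphere_add_ne_zero {E : Type*} [NormedAddCommGroup E] (θ : sphere (0 : E) 1) {h : E}
    (hh : ‖h‖ < 1) :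
    (θ : E) + h ≠ 0 := by
  intro h0
  rw [add_eq_zero_iff_eq_neg] at h0
  have := norm_eq_of_mem_sphere θ
  rw [h0, norm_neg] at this
  linarith

section RadialProjection

variable {E : Type*} [NormedAddCommGroup E] [NormedSpace ℝ E]

open Classical in
def radialProj (θ₀ : sphere (0 : E) 1) (x : E) : sphere (0 : E) 1 :=
  if hx : x = 0 then θ₀ else ⟨‖x‖⁻¹ • x, by simp [norm_smul, hx]⟩

lemma coe_radialProj {θ₀ : sphere (0 : E) 1} {x : E} (hx : x ≠ 0) :
    (radialProj θ₀ x : E) = ‖x‖⁻¹ • x := by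
  simp [radialProj, hx]

lemma norm_smul_radialProj (θ₀ : sphere (0 : E) 1) {x : E} (hx : x ≠ 0) :
    ‖x‖ • (radialProj θ₀ x : E) = x := by
  rw [coe_radialProj hx, smul_inv_smul₀ (norm_ne_zero_iff.2 hx)]

open Classical in
lemma measurable_radialProj [MeasurableSpace E] [BorelSpace E] (θ₀ : sphere (0 : E) 1) :
    Measurable (radialProj θ₀) := by
  rw [← (MeasurableEmbedding.subtype_coe isClosed_sphere.measurableSet).measurable_comp_iff]
  have : Subtype.val ∘ radialProj θ₀ = fun x => if x = 0 then (θ₀ : E) else ‖x‖⁻¹ • x := by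
    ext1 x; by_cases hx : x = 0 <;> simp [radialProj, hx]
  rw [this]
  exact Measurable.ite (measurableSet_singleton 0) measurable_const
    (measurable_id.norm.inv.smul measurable_id)

lemma apply_radialProj_of_homogeneous {Ω : E → ℝ}
    (hhom : ∀ c : ℝ, 0 < c → ∀ x : E, x ≠ 0 → Ω (c • x) = Ω x)
    (θ₀ : sphere (0 : E) 1) {x : E} (hx : x ≠ 0) :
    Ω (radialProj θ₀ x) = Ω x := by
  conv_rhs => rw [← norm_smul_radialProj θ₀ hx]
  exact (hhom _ (norm_pos_iff.2 hx) _ (ne_zero_of_mem_unit_sphere _)).symm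

lemma approximatesLinearOn_add_norm_smul (h : E) (s : Set E) :
    ApproximatesLinearOn (fun x => x + ‖x‖ • h) (ContinuousLinearMap.id ℝ E) s ‖h‖₊ := by
  intro x _ y _
  have : x + ‖x‖ • h - (y + ‖y‖ • h) - (x - y) = (‖x‖ - ‖y‖) • h := by
    rw [sub_smul]; abel
  simp only [ContinuousLinearMap.id_apply, this, norm_smul, Real.norm_eq_abs, coe_nnnorm]
  rw [mul_comm]
  exact mul_le_mul_of_nonneg_left (abs_norm_sub_norm_le x y) (norm_nonneg h)

lemma add_norm_smul_image_cone_subset (θ₀ : sphere (0 : E) 1) {h : E} (hh : ‖h‖ < 1)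
    (s : Set (sphere (0 : E) 1)) :
    (fun x => x + ‖x‖ • h) ''
        (Ioo (0 : ℝ) 1 • ((↑) '' ((fun θ : sphere (0 : E) 1 => radialProj θ₀ (θ + h)) ⁻¹' s))) ⊆
      Ioo (0 : ℝ) 2 • ((↑) '' s) := by
  rintro - ⟨-, ⟨r, hr, -, ⟨θ, hθ, rfl⟩, rfl⟩, rfl⟩
  have hne := sphere_add_ne_zero θ hh
  refine ⟨r * ‖(θ : E) + h‖, ⟨mul_pos hr.1 (norm_pos_iff.2 hne), ?_⟩, _, ⟨_, hθ, rfl⟩, ?_⟩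
  · have : ‖(θ : E) + h‖ < 2 := by
      linarith [norm_add_le (θ : E) h, norm_eq_of_mem_sphere θ]
    nlinarith [hr.1, hr.2, norm_nonneg ((θ : E) + h)]
  · simp only [mul_smul, norm_smul_radialProj θ₀ hne, norm_smul, norm_eq_of_mem_sphere θ,
      Real.norm_eq_abs, abs_of_pos hr.1, mul_one, smul_add]

variable [FiniteDimensional ℝ E] [MeasurableSpace E] [BorelSpace E]

lemma exists_measure_le_two_mul_measure_image_add_norm_smul (μ : Measure E)
    [μ.IsAddHaarMeasure] :
    ∃ r > 0, ∀ h : E, ‖h‖ < r → ∀ K : Set E, μ K ≤ 2 * μ ((fun x => x + ‖x‖ • h) '' K) := by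
  have hdet : ((2⁻¹ : ℝ≥0) : ℝ≥0∞) < ENNReal.ofReal |(ContinuousLinearMap.id ℝ E).det| := by
    simp [ContinuousLinearMap.det]
  obtain ⟨r, hr, hr0⟩ :=
    ((mul_le_addHaar_image_of_lt_det (μ := μ) _ hdet).and self_mem_nhdsWithin).exists
  refine ⟨r, hr0, fun h hh K => ?_⟩
  calc μ K = 2 * (((2⁻¹ : ℝ≥0) : ℝ≥0∞) * μ K) := by
        rw [← mul_assoc, ENNReal.coe_inv two_ne_zero, ENNReal.coe_two,
          ENNReal.mul_inv_cancel two_ne_zero ENNReal.ofNat_ne_top, one_mul]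
    _ ≤ 2 * μ ((fun x => x + ‖x‖ • h) '' K) := by
        gcongr
        exact hr K _ ((approximatesLinearOn_add_norm_smul h K).mono_num hh.le)

lemma exists_map_toSphere_radialProj_add_le (μ : Measure E) [μ.IsAddHaarMeasure]
    (θ₀ : sphere (0 : E) 1) :
    ∃ r > 0, r ≤ 1 ∧ ∀ h : E, ‖h‖ < r →
      μ.toSphere.map (fun θ : sphere (0 : E) 1 => radialProj θ₀ (θ + h)) ≤
        (2 ^ (finrank ℝ E + 1) : ℝ≥0∞) • μ.toSphere := by
  obtain ⟨r, hr, hK⟩ := exists_measure_le_two_mul_measure_image_add_norm_smul μ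
  refine ⟨min r 1, lt_min hr one_pos, min_le_right _ _, fun h hh => Measure.le_iff.2 fun s hs => ?_⟩
  have hU : Measurable fun θ : sphere (0 : E) 1 => radialProj θ₀ (θ + h) :=
    (measurable_radialProj θ₀).comp (measurable_subtype_coe.add_const h)
  have hcone : Ioo (0 : ℝ) 2 • ((↑) '' s : Set E) = (2 : ℝ) • (Ioo (0 : ℝ) 1 • ((↑) '' s)) := by
    rw [← smul_assoc, LinearOrderedField.smul_Ioo two_pos]; norm_num
  rw [Measure.map_apply hU hs, Measure.smul_apply, smul_eq_mul, μ.toSphere_apply' (hU hs),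
    μ.toSphere_apply' hs]
  calc _ ≤ (finrank ℝ E : ℝ≥0∞) * (2 * μ (Ioo (0 : ℝ) 2 • ((↑) '' s))) := by
        gcongr
        exact (hK h (hh.trans_le (min_le_left _ _)) _).trans
          (by gcongr; exact add_norm_smul_image_cone_subset θ₀ (hh.trans_le (min_le_right _ _)) s)
    _ = _ := by
        rw [hcone, μ.addHaar_smul_of_nonneg zero_le_two, ENNReal.ofReal_pow zero_le_two,
          ENNReal.ofReal_ofNat, pow_succ]
        ring

end RadialProjection

section Rotation

variable {E : Type*} [NormedAddCommGroup E] [NormedSpace ℝ E]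

def LinearIsometryEquiv.sphereHomeomorph (ρ : E ≃ₗᵢ[ℝ] E) :
    sphere (0 : E) 1 ≃ₜ sphere (0 : E) 1 :=
  ρ.toHomeomorph.subtype fun x => by simp

lemma LinearIsometryEquiv.cone_preimage_sphereHomeomorph (ρ : E ≃ₗᵢ[ℝ] E)
    (s : Set (sphere (0 : E) 1)) :
    Ioo (0 : ℝ) 1 • ((↑) '' (ρ.sphereHomeomorph ⁻¹' s) : Set E) =
      ρ ⁻¹' (Ioo (0 : ℝ) 1 • ((↑) '' s)) := by
  ext x
  simp only [Set.mem_smul, mem_preimage]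
  constructor
  · rintro ⟨r, hr, -, ⟨θ, hθ, rfl⟩, rfl⟩
    exact ⟨r, hr, _, ⟨_, hθ, rfl⟩, (ρ.map_smul r θ).symm⟩
  · rintro ⟨r, hr, -, ⟨θ, hθ, rfl⟩, hx⟩
    refine ⟨r, hr, _, ⟨ρ.sphereHomeomorph.symm θ, by simpa using hθ, rfl⟩, ρ.injective ?_⟩
    rw [ρ.map_smul, ← hx]
    exact congrArg (r • ·) (ρ.apply_symm_apply θ)

variable [MeasurableSpace E] [BorelSpace E]

lemma LinearIsometryEquiv.measurePreserving_sphereHomeomorph {μ : Measure E}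
    (ρ : E ≃ₗᵢ[ℝ] E) (hρ : MeasurePreserving ρ μ μ) :
    MeasurePreserving ρ.sphereHomeomorph μ.toSphere μ.toSphere := by
  refine ⟨ρ.sphereHomeomorph.measurable, Measure.ext fun s hs => ?_⟩
  rw [Measure.map_apply ρ.sphereHomeomorph.measurable hs,
    μ.toSphere_apply' (ρ.sphereHomeomorph.measurable hs), μ.toSphere_apply' hs,
    ρ.cone_preimage_sphereHomeomorph]
  congr 1
  exact MeasurePreserving.measure_preimage_equiv (f := ρ.toHomeomorph.toMeasurableEquiv) hρ _

end Rotation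

lemma MeasureTheory.Integrable.comp_of_map_le_smul {α β F : Type*} [MeasurableSpace α]
    [MeasurableSpace β] [NormedAddCommGroup F] {μ : Measure α} {ν : Measure β} {f : β → F}
    {U : α → β} {c : ℝ≥0∞} (hf : Integrable f ν) (hU : AEMeasurable U μ) (hc : c ≠ ∞)
    (hmap : μ.map U ≤ c • ν) :
    Integrable (f ∘ U) μ :=
  (integrable_map_measure (hf.aestronglyMeasurable.mono_ac
    (Measure.absolutelyContinuous_of_le_smul hmap)) hU).1 ((hf.smul_measure hc).mono_measure hmap)

lemma setLIntegral_closedBall_add_le {E : Type*} [NormedAddCommGroup E] [MeasurableSpace E]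
    [BorelSpace E] (μ : Measure E) [μ.IsAddRightInvariant] (f : E → ℝ≥0∞) {r s : ℝ} {v : E}
    (hv : ‖v‖ ≤ s) :
    ∫⁻ h in closedBall 0 r, f (h + v) ∂μ ≤ ∫⁻ y in closedBall 0 (r + s), f y ∂μ := by
  rw [(measurePreserving_add_right μ v).setLIntegral_comp_emb (measurableEmbedding_addRight v)]
  refine lintegral_mono_set ?_
  rintro - ⟨h, hh, rfl⟩
  rw [mem_closedBall_zero_iff] at hh ⊢
  exact (norm_add_le h v).trans (add_le_add hh hv)

lemma aemeasurable_ofReal_abs_sub {α : Type*} [MeasurableSpace α] {μ : Measure α} {f g : α → ℝ}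
    (hf : AEStronglyMeasurable f μ) (hg : AEStronglyMeasurable g μ) :
    AEMeasurable (fun x => ENNReal.ofReal |f x - g x|) μ :=
  (continuous_abs.comp_aestronglyMeasurable (hf.sub hg)).aemeasurable.ennreal_ofReal

lemma lintegral_lintegral_add {α β : Type*} [MeasurableSpace α] [MeasurableSpace β]
    {σ : Measure α} {ν : Measure β} [SFinite ν] {f g : α × β → ℝ≥0∞}
    (hf : AEMeasurable f (σ.prod ν)) (hg : AEMeasurable g (σ.prod ν)) :
    ∫⁻ x, ∫⁻ y, f (x, y) + g (x, y) ∂ν ∂σ =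
      (∫⁻ x, ∫⁻ y, f (x, y) ∂ν ∂σ) + ∫⁻ x, ∫⁻ y, g (x, y) ∂ν ∂σ := by
  rw [lintegral_lintegral (f := fun x y => f (x, y) + g (x, y)) (hf.add hg),
    lintegral_add_left' hf, lintegral_lintegral (f := fun x y => f (x, y)) hf,
    lintegral_lintegral (f := fun x y => g (x, y)) hg]

lemma lintegral_setLIntegral_le_of_forall_mem {α β : Type*} [MeasurableSpace α] [MeasurableSpace β]
    {σ : Measure α} [SFinite σ] {ν : Measure β} [SFinite ν] {B : Set β} (hB : MeasurableSet B)
    {G : α × β → ℝ≥0∞} (hG : AEMeasurable G (σ.prod (ν.restrict B))) {J : ℝ≥0∞}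
    (hJ : ∀ y ∈ B, ∫⁻ x, G (x, y) ∂σ ≤ J) :
    ∫⁻ x, ∫⁻ y in B, G (x, y) ∂ν ∂σ ≤ J * ν B := by
  rw [lintegral_lintegral_swap (f := fun x y => G (x, y)) hG]
  calc _ ≤ ∫⁻ _ in B, J ∂ν := setLIntegral_mono' hB hJ
    _ = J * ν B := setLIntegral_const _ _

lemma lintegral_abs_sub_comp_add_le {E : Type*} [NormedAddCommGroup E] [NormedSpace ℝ E]
    [MeasurableSpace E] {Ω : E → ℝ} {σ : Measure (sphere (0 : E) 1)} {K δ₁ : ℝ} (hK : 0 ≤ K)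
    (hreg : ∀ δ : ℝ, 0 < δ → δ < δ₁ → ∀ ξ : E, ‖ξ‖ = 1 →
      ∫ θ : sphere (0 : E) 1, |Ω θ - Ω (θ + δ • ξ)| ∂σ ≤ K * δ)
    (hint : Integrable (fun θ : sphere (0 : E) 1 => Ω θ) σ) {h : E} (hh : ‖h‖ < δ₁)
    (hint_add : Integrable (fun θ : sphere (0 : E) 1 => Ω (θ + h)) σ) {r : ℝ} (hr : ‖h‖ ≤ r) :
    ∫⁻ θ : sphere (0 : E) 1, ENNReal.ofReal |Ω θ - Ω (θ + h)| ∂σ ≤ ENNReal.ofReal (K * r) := by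
  rcases eq_or_ne h 0 with rfl | h0
  · simp
  have hpos : 0 < ‖h‖ := norm_pos_iff.2 h0
  have hξ : ‖‖h‖⁻¹ • h‖ = 1 := by rw [norm_smul, norm_inv, norm_norm, inv_mul_cancel₀ hpos.ne']
  have := hreg ‖h‖ hpos hh _ hξ
  rw [smul_inv_smul₀ hpos.ne'] at this
  rw [← ofReal_integral_eq_lintegral_ofReal (f := fun θ : sphere (0 : E) 1 => |Ω θ - Ω (θ + h)|)
    (hint.sub hint_add).abs (ae_of_all _ fun _ => abs_nonneg _)]
  exact ENNReal.ofReal_le_ofReal (this.trans (mul_le_mul_of_nonneg_left hr hK))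

lemma MeasureTheory.Measure.addHaar_closedBall_two_mul {E : Type*} [NormedAddCommGroup E]
    [NormedSpace ℝ E] [MeasurableSpace E] [BorelSpace E] [FiniteDimensional ℝ E] (μ : Measure E)
    [μ.IsAddHaarMeasure] (x : E) {r : ℝ} (hr : 0 ≤ r) :
    μ (closedBall x (2 * r)) = 2 ^ finrank ℝ E * μ (closedBall x r) := by
  rw [μ.addHaar_closedBall _ (by positivity), μ.addHaar_closedBall _ hr, mul_pow,
    ENNReal.ofReal_mul (by positivity), ENNReal.ofReal_pow zero_le_two, ENNReal.ofReal_ofNat,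
    mul_assoc]

section ModulusComparison

variable {E : Type*} [NormedAddCommGroup E] [NormedSpace ℝ E] [MeasurableSpace E] [BorelSpace E]
  {μ : Measure E} {Ω : E → ℝ}

lemma integrable_comp_add (hhom : ∀ c : ℝ, 0 < c → ∀ x : E, x ≠ 0 → Ω (c • x) = Ω x)
    (hint : Integrable (fun θ : sphere (0 : E) 1 => Ω θ) μ.toSphere) {θ₀ : sphere (0 : E) 1}
    {h : E} (hh : ‖h‖ < 1) {c : ℝ≥0∞} (hc : c ≠ ∞)
    (hmap : μ.toSphere.map (fun θ : sphere (0 : E) 1 => radialProj θ₀ (θ + h)) ≤ c • μ.toSphere) :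
    Integrable (fun θ : sphere (0 : E) 1 => Ω (θ + h)) μ.toSphere := by
  refine (hint.comp_of_map_le_smul ?_ hc hmap).congr (ae_of_all _ fun θ => ?_)
  · exact ((measurable_radialProj θ₀).comp (measurable_subtype_coe.add_const h)).aemeasurable
  · exact apply_radialProj_of_homogeneous hhom θ₀ (sphere_add_ne_zero θ hh)

lemma integrable_comp_rotation (ρ : E ≃ₗᵢ[ℝ] E) (hρμ : MeasurePreserving ρ μ μ)
    (hint : Integrable (fun θ : sphere (0 : E) 1 => Ω θ) μ.toSphere) :
    Integrable (fun θ : sphere (0 : E) 1 => Ω (ρ θ)) μ.toSphere :=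
  ((ρ.measurePreserving_sphereHomeomorph hρμ).integrable_comp_emb
    ρ.sphereHomeomorph.measurableEmbedding).2 hint

lemma integral_abs_comp_rotation_sub_le_two_mul (ρ : E ≃ₗᵢ[ℝ] E) (hρμ : MeasurePreserving ρ μ μ)
    (hint : Integrable (fun θ : sphere (0 : E) 1 => Ω θ) μ.toSphere) :
    ∫ θ : sphere (0 : E) 1, |Ω (ρ θ) - Ω θ| ∂μ.toSphere ≤
      2 * ∫ θ : sphere (0 : E) 1, |Ω θ| ∂μ.toSphere := by
  have hR := ρ.measurePreserving_sphereHomeomorph hρμ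
  have hrot := integrable_comp_rotation ρ hρμ hint
  calc _ ≤ ∫ θ : sphere (0 : E) 1, (|Ω (ρ θ)| + |Ω θ|) ∂μ.toSphere :=
        integral_mono (hrot.sub hint).abs (hrot.abs.add hint.abs) fun θ => abs_sub _ _
    _ = 2 * ∫ θ : sphere (0 : E) 1, |Ω θ| ∂μ.toSphere := by
        rw [integral_add hrot.abs hint.abs,
          ← hR.integral_comp ρ.sphereHomeomorph.measurableEmbedding (fun θ => |Ω θ|)]
        exact (two_mul _).symm

lemma lintegral_setLIntegral_comp_rotation_le [μ.IsAddRightInvariant] (ρ : E ≃ₗᵢ[ℝ] E)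
    (hρμ : MeasurePreserving ρ μ μ) {δ : ℝ} (hρ : ∀ θ : sphere (0 : E) 1, ‖ρ θ - θ‖ ≤ δ)
    (G : sphere (0 : E) 1 × E → ℝ≥0∞) :
    ∫⁻ θ, ∫⁻ h in closedBall 0 δ, G (ρ.sphereHomeomorph θ, h + (θ - ρ θ)) ∂μ ∂μ.toSphere ≤
      ∫⁻ θ, ∫⁻ y in closedBall 0 (2 * δ), G (θ, y) ∂μ ∂μ.toSphere := by
  refine le_of_le_of_eq ?_ ((ρ.measurePreserving_sphereHomeomorph hρμ).lintegral_comp_emb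
    ρ.sphereHomeomorph.measurableEmbedding fun θ => ∫⁻ y in closedBall 0 (2 * δ), G (θ, y) ∂μ)
  rw [two_mul]
  exact lintegral_mono fun θ =>
    setLIntegral_closedBall_add_le μ _ (by rw [norm_sub_rev]; exact hρ θ)

variable [FiniteDimensional ℝ E] [μ.IsAddHaarMeasure]

lemma aestronglyMeasurable_comp_add
    (hhom : ∀ c : ℝ, 0 < c → ∀ x : E, x ≠ 0 → Ω (c • x) = Ω x)
    (hΩ : AEStronglyMeasurable (fun θ : sphere (0 : E) 1 => Ω θ) μ.toSphere)
    {θ₀ : sphere (0 : E) 1} {r : ℝ} (hr : r < 1) {c : ℝ≥0∞}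
    (hmap : ∀ h : E, ‖h‖ ≤ r →
      μ.toSphere.map (fun θ : sphere (0 : E) 1 => radialProj θ₀ (θ + h)) ≤ c • μ.toSphere) :
    AEStronglyMeasurable (fun p : sphere (0 : E) 1 × E => Ω (p.1 + p.2))
      (μ.toSphere.prod (μ.restrict (closedBall 0 r))) := by
  have hT : Measurable fun p : sphere (0 : E) 1 × E => radialProj θ₀ (p.1 + p.2) :=
    (measurable_radialProj θ₀).comp
      ((measurable_subtype_coe.comp measurable_fst).add measurable_snd)
  have hqmp : Measure.QuasiMeasurePreserving
      (fun p : sphere (0 : E) 1 × E => radialProj θ₀ (p.1 + p.2))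
      (μ.toSphere.prod (μ.restrict (closedBall 0 r))) μ.toSphere :=
    QuasiMeasurePreserving.prod_of_left hT <| ae_restrict_of_forall_mem measurableSet_closedBall
      fun h hh => ⟨hT.comp measurable_prodMk_right,
        Measure.absolutelyContinuous_of_le_smul (hmap h (mem_closedBall_zero_iff.1 hh))⟩
  refine (hΩ.comp_quasiMeasurePreserving hqmp).congr ?_
  filter_upwards [Measure.quasiMeasurePreserving_snd.ae (ae_restrict_mem measurableSet_closedBall)]
    with p hp
  exact apply_radialProj_of_homogeneous hhom θ₀
    (sphere_add_ne_zero p.1 ((mem_closedBall_zero_iff.1 hp).trans_lt hr))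

lemma lintegral_abs_comp_rotation_sub_le (ρ : E ≃ₗᵢ[ℝ] E) (hρμ : MeasurePreserving ρ μ μ)
    {δ : ℝ} (hδ : 0 < δ) (hρ : ∀ θ : sphere (0 : E) 1, ‖ρ θ - θ‖ ≤ δ)
    (hΩ : AEStronglyMeasurable (fun θ : sphere (0 : E) 1 => Ω θ) μ.toSphere)
    (hmeas : AEStronglyMeasurable (fun p : sphere (0 : E) 1 × E => Ω (p.1 + p.2))
      (μ.toSphere.prod (μ.restrict (closedBall 0 (2 * δ)))))
    {J : ℝ≥0∞} (hJ : ∀ y ∈ closedBall (0 : E) (2 * δ),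
      ∫⁻ θ : sphere (0 : E) 1, ENNReal.ofReal |Ω θ - Ω (θ + y)| ∂μ.toSphere ≤ J) :
    ∫⁻ θ : sphere (0 : E) 1, ENNReal.ofReal |Ω (ρ θ) - Ω θ| ∂μ.toSphere ≤
      (1 + 2 ^ finrank ℝ E) * J := by
  set σ := μ.toSphere
  set B₁ := closedBall (0 : E) δ
  set B₂ := closedBall (0 : E) (2 * δ)
  have hfst (ν : Measure E) [SFinite ν] :
      AEStronglyMeasurable (fun p : sphere (0 : E) 1 × E => Ω p.1) (σ.prod ν) :=
    hΩ.comp_quasiMeasurePreserving Measure.quasiMeasurePreserving_fst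
  have hfst_rot : AEStronglyMeasurable (fun p : sphere (0 : E) 1 × E => Ω (ρ p.1))
      (σ.prod (μ.restrict B₁)) :=
    (hΩ.comp_measurePreserving (ρ.measurePreserving_sphereHomeomorph hρμ)
      ).comp_quasiMeasurePreserving Measure.quasiMeasurePreserving_fst
  have hmeas₁ : AEStronglyMeasurable (fun p : sphere (0 : E) 1 × E => Ω (p.1 + p.2))
      (σ.prod (μ.restrict B₁)) :=
    hmeas.mono_ac <| Measure.AbsolutelyContinuous.rfl.prod <| Measure.absolutelyContinuous_of_le <|
      Measure.restrict_mono (closedBall_subset_closedBall (by linarith)) le_rfl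
  have hB₁ : μ B₁ ≠ 0 := (measure_closedBall_pos μ 0 hδ).ne'
  have hB₁' : μ B₁ ≠ ∞ := measure_closedBall_lt_top.ne
  refine (ENNReal.mul_le_mul_iff_left hB₁ hB₁').1 ?_
  calc (∫⁻ θ, ENNReal.ofReal |Ω (ρ θ) - Ω θ| ∂σ) * μ B₁
      = ∫⁻ θ, ∫⁻ _ in B₁, ENNReal.ofReal |Ω (ρ θ) - Ω θ| ∂μ ∂σ := by
        simp only [setLIntegral_const, lintegral_mul_const' _ _ hB₁']
    _ ≤ ∫⁻ θ, ∫⁻ h in B₁, (ENNReal.ofReal |Ω θ - Ω (θ + h)| +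
          ENNReal.ofReal |Ω (ρ θ) - Ω (θ + h)|) ∂μ ∂σ := by
        refine lintegral_mono fun θ => lintegral_mono fun h => ?_
        rw [← ENNReal.ofReal_add (abs_nonneg _) (abs_nonneg _), add_comm, abs_sub_comm (Ω θ)]
        exact ENNReal.ofReal_le_ofReal (abs_sub_le _ _ _)
    _ = (∫⁻ θ, ∫⁻ h in B₁, ENNReal.ofReal |Ω θ - Ω (θ + h)| ∂μ ∂σ) +
          ∫⁻ θ, ∫⁻ h in B₁, ENNReal.ofReal |Ω (ρ θ) - Ω (θ + h)| ∂μ ∂σ :=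
        lintegral_lintegral_add (aemeasurable_ofReal_abs_sub (hfst _) hmeas₁)
          (aemeasurable_ofReal_abs_sub hfst_rot hmeas₁)
    _ = (∫⁻ θ, ∫⁻ h in B₁, ENNReal.ofReal |Ω θ - Ω (θ + h)| ∂μ ∂σ) +
          ∫⁻ θ, ∫⁻ h in B₁, ENNReal.ofReal |Ω (ρ θ) - Ω (ρ θ + (h + (θ - ρ θ)))| ∂μ ∂σ := by
        congr 1
        refine lintegral_congr fun θ => lintegral_congr fun h => ?_
        rw [add_left_comm, add_sub_cancel, add_comm h]
    _ ≤ J * μ B₁ + J * μ B₂ := add_le_add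
        (lintegral_setLIntegral_le_of_forall_mem measurableSet_closedBall
          (aemeasurable_ofReal_abs_sub (hfst _) hmeas₁)
          fun y hy => hJ y (closedBall_subset_closedBall (by linarith) hy))
        ((lintegral_setLIntegral_comp_rotation_le ρ hρμ hρ
          fun p => ENNReal.ofReal |Ω p.1 - Ω (p.1 + p.2)|).trans
          (lintegral_setLIntegral_le_of_forall_mem measurableSet_closedBall
            (aemeasurable_ofReal_abs_sub (hfst _) hmeas) hJ))
    _ = (1 + 2 ^ finrank ℝ E) * J * μ B₁ := by rw [μ.addHaar_closedBall_two_mul 0 hδ.le]; ring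

lemma exists_integral_abs_comp_rotation_sub_le [Nontrivial E]
    (hhom : ∀ c : ℝ, 0 < c → ∀ x : E, x ≠ 0 → Ω (c • x) = Ω x)
    (hint : Integrable (fun θ : sphere (0 : E) 1 => Ω θ) μ.toSphere) {K δ₁ : ℝ} (hδ₁ : 0 < δ₁)
    (hreg : ∀ δ : ℝ, 0 < δ → δ < δ₁ → ∀ ξ : E, ‖ξ‖ = 1 →
      ∫ θ : sphere (0 : E) 1, |Ω θ - Ω (θ + δ • ξ)| ∂μ.toSphere ≤ K * δ) :
    ∃ r > 0, ∀ ρ : E ≃ₗᵢ[ℝ] E, MeasurePreserving ρ μ μ → ∀ δ, 0 < δ → δ < r →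
      (∀ θ : sphere (0 : E) 1, ‖ρ θ - θ‖ ≤ δ) →
      ∫ θ : sphere (0 : E) 1, |Ω (ρ θ) - Ω θ| ∂μ.toSphere ≤
        (1 + 2 ^ finrank ℝ E) * (2 * K) * δ := by
  obtain ⟨θ₀⟩ : Nonempty (sphere (0 : E) 1) :=
    (NormedSpace.sphere_nonempty.2 zero_le_one).to_subtype
  have hK : 0 ≤ K := nonneg_of_mul_nonneg_left ((integral_nonneg fun _ => abs_nonneg _).trans
    (hreg _ (half_pos hδ₁) (half_lt_self hδ₁) θ₀ (norm_eq_of_mem_sphere θ₀))) (half_pos hδ₁)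
  obtain ⟨r₀, hr₀, hr₀1, hmap⟩ := exists_map_toSphere_radialProj_add_le μ θ₀
  refine ⟨min r₀ δ₁ / 2, by positivity, fun ρ hρμ δ hδ hδr hρ => ?_⟩
  have h2δ₀ : 2 * δ < r₀ := by linarith [min_le_left r₀ δ₁]
  have h2δ₁ : 2 * δ < δ₁ := by linarith [min_le_right r₀ δ₁]
  have hmap' (h : E) (hh : ‖h‖ ≤ 2 * δ) := hmap h (hh.trans_lt h2δ₀)
  have hJ (y : E) (hy : y ∈ closedBall (0 : E) (2 * δ)) :=
    lintegral_abs_sub_comp_add_le hK hreg hint ((mem_closedBall_zero_iff.1 hy).trans_lt h2δ₁)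
      (integrable_comp_add hhom hint ((mem_closedBall_zero_iff.1 hy).trans_lt (h2δ₀.trans_le hr₀1))
        (by finiteness) (hmap' y (mem_closedBall_zero_iff.1 hy))) (mem_closedBall_zero_iff.1 hy)
  have hL := lintegral_abs_comp_rotation_sub_le ρ hρμ hδ hρ hint.1
    (aestronglyMeasurable_comp_add hhom hint.1 (h2δ₀.trans_le hr₀1) hmap') hJ
  rw [integral_eq_lintegral_of_nonneg_ae (f := fun θ : sphere (0 : E) 1 => |Ω (ρ θ) - Ω θ|)
    (ae_of_all _ fun _ => abs_nonneg _)
    ((integrable_comp_rotation ρ hρμ hint).sub hint).abs.aestronglyMeasurable]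
  refine ENNReal.toReal_le_of_le_ofReal (by positivity) (hL.trans_eq ?_)
  rw [← ENNReal.ofReal_ofNat 2, ← ENNReal.ofReal_pow zero_le_two, ← ENNReal.ofReal_one,
    ← ENNReal.ofReal_add zero_le_one (by positivity), ← ENNReal.ofReal_mul (by positivity)]
  ring_nf

end ModulusComparison

lemma lintegral_Ioo_ofReal_div_lt_top {f : ℝ → ℝ} {δ₀ K M : ℝ} (hδ₀ : 0 < δ₀) (hM : 0 ≤ M)
    (hsmall : ∀ δ, 0 < δ → δ < δ₀ → f δ ≤ K * δ) (hbdd : ∀ δ ∈ Ioo (0 : ℝ) 1, f δ ≤ M) :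
    ∫⁻ δ in Ioo (0 : ℝ) 1, ENNReal.ofReal (f δ / δ) < ∞ := by
  refine setLIntegral_lt_top_of_le_nnreal measure_Ioo_lt_top.ne
    ⟨(max K (M / δ₀)).toNNReal, fun δ hδ => ENNReal.ofReal_le_ofReal ?_⟩
  rw [div_le_iff₀ hδ.1]
  rcases lt_or_ge δ δ₀ with hlt | hge
  · exact (hsmall δ hδ.1 hlt).trans (mul_le_mul_of_nonneg_right (le_max_left _ _) hδ.1.le)
  · calc f δ ≤ M / δ₀ * δ := (hbdd δ hδ).trans <| by
          rw [div_mul_eq_mul_div, le_div_iff₀ hδ₀]; exact mul_le_mul_of_nonneg_left hge hM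
      _ ≤ max K (M / δ₀) * δ := mul_le_mul_of_nonneg_right (le_max_right _ _) hδ.1.le

lemma omegaRot_le {n : ℕ} {Ω : EuclideanSpace ℝ (Fin n) → ℝ} {δ B : ℝ} (hδ : 0 ≤ δ)
    (hB : ∀ ρ : EuclideanSpace ℝ (Fin n) ≃ₗᵢ[ℝ] EuclideanSpace ℝ (Fin n),
      (∀ x : EuclideanSpace ℝ (Fin n), ‖x‖ = 1 → ‖ρ x - x‖ ≤ δ) →
      ∫ θ : unitSphere n, |Ω (ρ θ) - Ω θ| ∂sphereMeasure n ≤ B) :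
    omegaRot n Ω δ ≤ B :=
  csSup_le ⟨_, LinearIsometryEquiv.refl ℝ _, by simp, fun x _ => by simpa using hδ, rfl⟩
    (by rintro _ ⟨ρ, -, hρ, rfl⟩; exact hB ρ hρ)

theorem regularity_condition_implies_L1Dini_general
    {n : ℕ} (hn : 0 < n) (Ω : EuclideanSpace ℝ (Fin n) → ℝ)
    (hhom : HomogeneousZero Ω)
    (hint : Integrable (fun θ : unitSphere n => Ω (θ : EuclideanSpace ℝ (Fin n)))
      (sphereMeasure n))
    (C : ℝ)
    (hreg : ∀ δ : ℝ, 0 < δ → δ < 1 / n →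
      ∀ ξ : EuclideanSpace ℝ (Fin n), ‖ξ‖ = 1 →
        (∫ θ : unitSphere n,
            |Ω (θ : EuclideanSpace ℝ (Fin n)) - Ω ((θ : EuclideanSpace ℝ (Fin n)) + δ • ξ)|
            ∂(sphereMeasure n)) ≤
          C * n * δ *
            ∫ θ : unitSphere n, |Ω (θ : EuclideanSpace ℝ (Fin n))| ∂(sphereMeasure n)) :
    L1Dini n Ω := by
  have : Nonempty (Fin n) := ⟨⟨0, hn⟩⟩
  set A := ∫ θ : unitSphere n, |Ω θ| ∂sphereMeasure n
  obtain ⟨r, hr, hrot⟩ := exists_integral_abs_comp_rotation_sub_le (μ := volume) hhom hint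
    (one_div_pos.2 (Nat.cast_pos.2 hn)) fun δ hδ hδn ξ hξ =>
      (hreg δ hδ hδn ξ hξ).trans_eq (mul_right_comm _ _ A)
  have hA : 0 ≤ 2 * A := mul_nonneg zero_le_two (integral_nonneg fun _ => abs_nonneg _)
  refine ⟨hint, lintegral_Ioo_ofReal_div_lt_top hr hA
    (fun δ hδ hδr => omegaRot_le hδ.le fun ρ hρ =>
      hrot ρ ρ.measurePreserving δ hδ hδr fun θ => hρ θ (norm_eq_of_mem_sphere θ))
    (fun δ hδ => omegaRot_le hδ.1.le fun ρ _ =>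
      integral_abs_comp_rotation_sub_le_two_mul ρ ρ.measurePreserving hint)⟩

/-- If `Ω` is homogeneous of degree zero, integrable with mean value zero
on `S^{n-1}`, and satisfies the regularity condition
`sup_{|ξ|=1} ∫_{S^{n-1}} |Ω(θ) - Ω(θ+δξ)| dσ(θ) ≤ C n δ ∫_{S^{n-1}} |Ω(θ)| dσ(θ)`
for all `0 < δ < 1/n`, then `Ω` satisfies the `L¹`-Dini condition. -/
theorem regularity_condition_implies_L1Dini
    {n : ℕ} (hn : 0 < n) (Ω : EuclideanSpace ℝ (Fin n) → ℝ)
    (hhom : HomogeneousZero Ω)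
    (hint : Integrable (fun θ : unitSphere n => Ω (θ : EuclideanSpace ℝ (Fin n)))
      (sphereMeasure n))
    (hmean : ∫ θ : unitSphere n, Ω (θ : EuclideanSpace ℝ (Fin n)) ∂(sphereMeasure n) = 0)
    (C : ℝ)
    (hreg : ∀ δ : ℝ, 0 < δ → δ < 1 / n →
      ∀ ξ : EuclideanSpace ℝ (Fin n), ‖ξ‖ = 1 →
        (∫ θ : unitSphere n,
            |Ω (θ : EuclideanSpace ℝ (Fin n)) - Ω ((θ : EuclideanSpace ℝ (Fin n)) + δ • ξ)|
            ∂(sphereMeasure n)) ≤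
          C * n * δ *
            ∫ θ : unitSphere n, |Ω (θ : EuclideanSpace ℝ (Fin n))| ∂(sphereMeasure n)) :
    L1Dini n Ω :=
  regularity_condition_implies_L1Dini_general hn Ω hhom hint C hreg
end
end

section
/- Let θ ∈ S^{n-1} and 0 < δ < 1/2. Then the spherical cap {η ∈ S^{n-1} : |η − θ| ≤ δ} is contained in the set {(θ + 2δξ)/|θ + 2δξ| : ξ ∈ S^{n-1}}. -/
/-!
Write `c = ⟪η, θ⟫`. On the cap, `‖η - θ‖² = 2 - 2c ≤ δ²`, so `c > 0` and `1 ≤ c² + (2δ)²`: the ray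
through `η` reaches within `2δ` of `θ`, hence meets the sphere of radius `2δ` about `θ` at some
`t • η` with `t > 0`. Then `ξ = (t • η - θ) / (2δ)` is a unit vector with `θ + 2δξ = t • η`, whose
normalization is `η`.
-/

open Set RealInnerProductSpace

section

variable {E : Type*} [NormedAddCommGroup E] [InnerProductSpace ℝ E]

/-- The positive root `t = c + √(c² - ‖θ‖² + r²)` of `t² - 2ct + ‖θ‖² = r²`. -/
theorem exists_pos_norm_smul_sub_eq {η θ : E} (hη : ‖η‖ = 1) {r : ℝ} (hr : 0 ≤ r)
    (hinner : 0 < ⟪η, θ⟫) (hclose : ‖θ‖ ^ 2 ≤ ⟪η, θ⟫ ^ 2 + r ^ 2) :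
    ∃ t : ℝ, 0 < t ∧ ‖t • η - θ‖ = r := by
  set c := ⟪η, θ⟫
  set s := √(c ^ 2 - ‖θ‖ ^ 2 + r ^ 2)
  have hs : s ^ 2 = c ^ 2 - ‖θ‖ ^ 2 + r ^ 2 := Real.sq_sqrt (by linarith)
  have ht : 0 < c + s := by positivity
  refine ⟨c + s, ht, ?_⟩
  have hsq : ‖(c + s) • η - θ‖ ^ 2 = r ^ 2 := by
    rw [norm_sub_sq_real, norm_smul, real_inner_smul_left, hη, Real.norm_of_nonneg ht.le]
    linear_combination hs
  exact (pow_left_inj₀ (norm_nonneg _) hr two_ne_zero).1 hsq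

theorem exists_unit_eq_normalize_add_smul {η θ : E} (hη : ‖η‖ = 1) {t r : ℝ} (ht : 0 < t)
    (hr : 0 < r) (h : ‖t • η - θ‖ = r) :
    ∃ ξ : E, ‖ξ‖ = 1 ∧ η = ‖θ + r • ξ‖⁻¹ • (θ + r • ξ) := by
  refine ⟨r⁻¹ • (t • η - θ), ?_, ?_⟩
  · rw [norm_smul, h, Real.norm_of_nonneg (inv_nonneg.2 hr.le), inv_mul_cancel₀ hr.ne']
  · have hsum : θ + r • r⁻¹ • (t • η - θ) = t • η := by
      rw [smul_inv_smul₀ hr.ne', add_sub_cancel]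
    rw [hsum, norm_smul, hη, mul_one, Real.norm_of_nonneg ht.le, inv_smul_smul₀ ht.ne']

end

/-- For `θ ∈ S^{n-1}` and `0 < δ < 1/2`, the spherical cap
`{η ∈ S^{n-1} : |η - θ| ≤ δ}` is contained in `{(θ + 2δξ)/|θ + 2δξ| : ξ ∈ S^{n-1}}`. -/
theorem cap_subset_normalized_translates
    {n : ℕ} (θ : EuclideanSpace ℝ (Fin n)) (hθ : ‖θ‖ = 1)
    (δ : ℝ) (hδ0 : 0 < δ) (hδ : δ < 1 / 2) :
    {η : EuclideanSpace ℝ (Fin n) | ‖η‖ = 1 ∧ ‖η - θ‖ ≤ δ} ⊆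
      {η : EuclideanSpace ℝ (Fin n) | ∃ ξ : EuclideanSpace ℝ (Fin n), ‖ξ‖ = 1 ∧
        η = ‖θ + (2 * δ) • ξ‖⁻¹ • (θ + (2 * δ) • ξ)} := by
  rintro η ⟨hη, hηθ⟩
  have hcap : 2 - 2 * ⟪η, θ⟫ ≤ δ ^ 2 := by
    have hsq := norm_sub_sq_real η θ
    rw [hη, hθ] at hsq
    nlinarith [norm_nonneg (η - θ)]
  have hinner : 0 < ⟪η, θ⟫ := by nlinarith
  have hclose : ‖θ‖ ^ 2 ≤ ⟪η, θ⟫ ^ 2 + (2 * δ) ^ 2 := by rw [hθ]; nlinarith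
  obtain ⟨t, ht, hdist⟩ := exists_pos_norm_smul_sub_eq hη (by positivity) hinner hclose
  exact exists_unit_eq_normalize_add_smul hη ht (by positivity) hdist
end

section
/- Let Ω be homogeneous of degree zero on ℝⁿ \ {0} with Ω ∈ L¹(S^{n-1}). Then for every h ∈ ℝⁿ with 0 < |h| < 1, ∫_{S^{n-1}} |Ω((x+h)/|x+h|)| dσ(x) ≤ 2^{n−1} ∫_{S^{n-1}} |Ω(x)| dσ(x). Consequently sup_{|h|≤δ} ∫_{S^{n-1}} |Ω(θ+h)| dσ(θ) ≤ 2^{n−1} ‖Ω‖_{L¹(S^{n-1})} for every 0 < δ < 1. -/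
open MeasureTheory Filter Set

noncomputable section

/-!
For `‖h‖ < 1` the cone map `Ψ x = x + ‖x‖ h` is injective and sends the ray through a unit
vector `θ` onto the ray through `θ + h`. Its Jacobian at `x` is `1 + ⟪x / ‖x‖, h⟫`, and it maps
the star-shaped region `{x : ‖x‖ < ‖x / ‖x‖ + h‖⁻¹}` into the unit ball. Computing both sides of
the change of variables in polar coordinates gives, for `g ≥ 0` on the sphere,
`∫ (1 + ⟪θ, h⟫) ‖θ + h‖⁻ⁿ g((θ + h) / ‖θ + h‖) dσ ≤ ∫ g dσ`.
The weight is at least `2^{1-n}`: `‖θ + h‖ ≤ 2` and `‖θ + h‖² ≤ 2 (1 + ⟪θ, h⟫)` when `n ≥ 2`,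
while `‖θ + h‖ = 1 + ⟪θ, h⟫` when `n = 1`. Homogeneity of `Ω` identifies `Ω(θ + h)` with
`Ω((θ + h) / ‖θ + h‖)`.
-/

open Metric Module
open scoped ENNReal InnerProductSpace

section SphereProj

variable {E : Type*} [NormedAddCommGroup E] [NormedSpace ℝ E] [Nontrivial E]

open scoped Classical in
/-- `0` is sent to an arbitrary point of the sphere. -/
def sphereProj (x : E) : sphere (0 : E) 1 :=
  ⟨if x = 0 then (NormedSpace.sphere_nonempty.2 zero_le_one).some else ‖x‖⁻¹ • x, by
    split_ifs with hx
    · exact Set.Nonempty.some_mem _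
    · simp [norm_smul, hx]⟩

theorem coe_sphereProj {x : E} (hx : x ≠ 0) : (sphereProj x : E) = ‖x‖⁻¹ • x := by
  simp [sphereProj, hx]

theorem norm_smul_sphereProj (x : E) : ‖x‖ • (sphereProj x : E) = x := by
  rcases eq_or_ne x 0 with rfl | hx
  · simp
  · rw [coe_sphereProj hx, smul_inv_smul₀ (norm_ne_zero_iff.2 hx)]

theorem sphereProj_smul {c : ℝ} (hc : 0 < c) {x : E} (hx : x ≠ 0) :
    sphereProj (c • x) = sphereProj x := by
  ext
  rw [coe_sphereProj hx, coe_sphereProj (smul_ne_zero hc.ne' hx), norm_smul, smul_smul,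
    Real.norm_of_nonneg hc.le, mul_inv, mul_right_comm, inv_mul_cancel₀ hc.ne', one_mul]

theorem sphereProj_coe (θ : sphere (0 : E) 1) : sphereProj (θ : E) = θ := by
  ext
  rw [coe_sphereProj (ne_zero_of_mem_unit_sphere θ), norm_eq_of_mem_sphere θ, inv_one, one_smul]

variable [MeasurableSpace E] [BorelSpace E]

theorem measurable_sphereProj : Measurable (sphereProj : E → sphere (0 : E) 1) := by
  unfold sphereProj
  exact (Measurable.ite (measurableSet_singleton 0) measurable_const
    (measurable_norm.inv.smul measurable_id)).subtype_mk

theorem measurable_sphereProj_add (h : E) :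
    Measurable fun θ : sphere (0 : E) 1 => sphereProj ((θ : E) + h) :=
  measurable_sphereProj.comp (by fun_prop)

theorem measurableSet_ne_zero_and_norm_lt {R : sphere (0 : E) 1 → ℝ} (hR : Measurable R) :
    MeasurableSet {x : E | x ≠ 0 ∧ ‖x‖ < R (sphereProj x)} :=
  (measurableSet_singleton 0).compl.inter
    (measurableSet_lt measurable_norm (hR.comp measurable_sphereProj))

end SphereProj

section Polar

variable {E : Type*} [NormedAddCommGroup E] [NormedSpace ℝ E] [FiniteDimensional ℝ E]
  [Nontrivial E] [MeasurableSpace E] [BorelSpace E] (μ : Measure E) [μ.IsAddHaarMeasure]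

theorem lintegral_eq_lintegral_toSphere_volumeIoiPow {F : E → ℝ≥0∞} (hF : Measurable F) :
    ∫⁻ x, F x ∂μ = ∫⁻ θ, ∫⁻ r, F ((r : ℝ) • (θ : E))
      ∂Measure.volumeIoiPow (finrank ℝ E - 1) ∂μ.toSphere := by
  set G : sphere (0 : E) 1 × Ioi (0 : ℝ) → ℝ≥0∞ := fun p => F ((p.2 : ℝ) • (p.1 : E))
  have hG : Measurable G := hF.comp (by fun_prop)
  calc ∫⁻ x, F x ∂μ = ∫⁻ x in {0}ᶜ, F x ∂μ := by rw [restrict_compl_singleton]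
    _ = ∫⁻ x : ({0}ᶜ : Set E), F x ∂(μ.comap (↑)) :=
      (lintegral_subtype_comap (measurableSet_singleton 0).compl _).symm
    _ = ∫⁻ p, G p ∂(μ.toSphere.prod (Measure.volumeIoiPow (finrank ℝ E - 1))) := by
      rw [← μ.measurePreserving_homeomorphUnitSphereProd.lintegral_comp_emb
        (Homeomorph.measurableEmbedding _)]
      congr with x
      simp [G, ← homeomorphUnitSphereProd_symm_apply_coe]
    _ = _ := lintegral_prod G hG.aemeasurable

theorem lintegral_sphereProj_of_norm_lt {R : sphere (0 : E) 1 → ℝ} (hR : Measurable R)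
    (hR₀ : ∀ θ, 0 < R θ) {g : sphere (0 : E) 1 → ℝ≥0∞} (hg : Measurable g) :
    ∫⁻ x in {x | x ≠ 0 ∧ ‖x‖ < R (sphereProj x)}, g (sphereProj x) ∂μ =
      ∫⁻ θ, g θ * ENNReal.ofReal (R θ ^ finrank ℝ E / finrank ℝ E) ∂μ.toSphere := by
  have hS := measurableSet_ne_zero_and_norm_lt hR
  rw [← lintegral_indicator hS, lintegral_eq_lintegral_toSphere_volumeIoiPow μ
    (F := indicator _ fun x => g (sphereProj x)) ((hg.comp measurable_sphereProj).indicator hS)]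
  refine lintegral_congr fun θ => ?_
  have hslice : ∀ r : Ioi (0 : ℝ),
      {x : E | x ≠ 0 ∧ ‖x‖ < R (sphereProj x)}.indicator (fun x => g (sphereProj x))
        ((r : ℝ) • (θ : E)) = (Iio ⟨R θ, hR₀ θ⟩).indicator (fun _ => g θ) r := by
    intro r
    have hr : (0 : ℝ) < r := r.2
    have hθ : (θ : E) ≠ 0 := ne_zero_of_mem_unit_sphere θ
    simp only [indicator, mem_ofPred_eq, smul_ne_zero hr.ne' hθ, ne_eq, not_false_eq_true,
      true_and, norm_smul, norm_eq_of_mem_sphere θ, Real.norm_of_nonneg hr.le, mul_one,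
      sphereProj_smul hr hθ, sphereProj_coe, mem_Iio, ← Subtype.coe_lt_coe]
  have hd : finrank ℝ E - 1 + 1 = finrank ℝ E := Nat.sub_add_cancel finrank_pos
  rw [lintegral_congr hslice, lintegral_indicator_const measurableSet_Iio,
    Measure.volumeIoiPow_apply_Iio, ← Nat.cast_add_one, hd]

end Polar

section RadialShear

variable {E : Type*} [NormedAddCommGroup E]

theorem ContinuousLinearMap.det_id_add_smulRight [NormedSpace ℝ E] [FiniteDimensional ℝ E]
    (f : E →L[ℝ] ℝ) (v : E) : (ContinuousLinearMap.id ℝ E + f.smulRight v).det = 1 + f v := by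
  have : ((ContinuousLinearMap.id ℝ E + f.smulRight v : E →L[ℝ] E) : E →ₗ[ℝ] E) =
      LinearMap.transvection (f : E →ₗ[ℝ] ℝ) v := by
    ext x; simp [LinearMap.transvection.apply]
  rw [ContinuousLinearMap.det, this, LinearMap.transvection.det]
  rfl

theorem add_ne_zero_of_norm_lt {θ h : E} (hθ : ‖θ‖ = 1) (hh : ‖h‖ < 1) :
    θ + h ≠ 0 := by
  intro hsum
  rw [eq_neg_of_add_eq_zero_right hsum, norm_neg, hθ] at hh
  exact lt_irrefl _ hh

def radialShear [NormedSpace ℝ E] (h x : E) : E := x + ‖x‖ • h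

theorem injective_radialShear [NormedSpace ℝ E] {h : E} (hh : ‖h‖ < 1) :
    Function.Injective (radialShear h) := by
  intro x y hxy
  have hsub : x - y = (‖y‖ - ‖x‖) • h := by
    rw [radialShear, radialShear] at hxy
    rw [sub_smul, sub_eq_sub_iff_add_eq_add, add_comm (‖y‖ • h), hxy]
  have : ‖x - y‖ ≤ ‖x - y‖ * ‖h‖ :=
    calc ‖x - y‖ = |‖y‖ - ‖x‖| * ‖h‖ := by rw [hsub, norm_smul, Real.norm_eq_abs]
      _ ≤ ‖x - y‖ * ‖h‖ := by
        gcongr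
        rw [norm_sub_rev]
        exact abs_norm_sub_norm_le y x
  have : ‖x - y‖ = 0 := by nlinarith [norm_nonneg (x - y)]
  rwa [norm_eq_zero, sub_eq_zero] at this

section Sphere

variable [NormedSpace ℝ E] [Nontrivial E] {h : E}

theorem radialShear_eq_norm_smul (h x : E) :
    radialShear h x = ‖x‖ • ((sphereProj x : E) + h) := by
  rw [radialShear, smul_add, norm_smul_sphereProj]

theorem sphereProj_radialShear (hh : ‖h‖ < 1) {x : E} (hx : x ≠ 0) :
    sphereProj (radialShear h x) = sphereProj ((sphereProj x : E) + h) := by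
  rw [radialShear_eq_norm_smul, sphereProj_smul (norm_pos_iff.2 hx)
    (add_ne_zero_of_norm_lt (norm_eq_of_mem_sphere _) hh)]

theorem radialShear_image_subset (hh : ‖h‖ < 1) :
    radialShear h '' {x | x ≠ 0 ∧ ‖x‖ < ‖(sphereProj x : E) + h‖⁻¹} ⊆
      {y | y ≠ 0 ∧ ‖y‖ < 1} := by
  rintro _ ⟨x, ⟨hx, hxR⟩, rfl⟩
  have hsum := add_ne_zero_of_norm_lt (norm_eq_of_mem_sphere (sphereProj x)) hh
  rw [mem_ofPred_eq, radialShear_eq_norm_smul, norm_smul, norm_norm]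
  refine ⟨smul_ne_zero (norm_ne_zero_iff.2 hx) hsum, ?_⟩
  calc ‖x‖ * ‖(sphereProj x : E) + h‖ < ‖(sphereProj x : E) + h‖⁻¹ * ‖(sphereProj x : E) + h‖ := by
        gcongr
    _ = 1 := inv_mul_cancel₀ (norm_ne_zero_iff.2 hsum)

end Sphere

variable [InnerProductSpace ℝ E]

theorem hasStrictFDerivAt_norm {x : E} (hx : x ≠ 0) :
    HasStrictFDerivAt (‖·‖) (‖x‖⁻¹ • innerSL ℝ x) x := by
  have h := (hasStrictFDerivAt_norm_sq x).sqrt (pow_ne_zero 2 (norm_ne_zero_iff.2 hx))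
  simp only [Real.sqrt_sq (norm_nonneg _)] at h
  convert h using 1
  rw [← Nat.cast_smul_eq_nsmul ℝ, smul_smul, Nat.cast_ofNat]
  congr 1
  field_simp

theorem hasFDerivAt_radialShear (h : E) {x : E} (hx : x ≠ 0) :
    HasFDerivAt (radialShear h)
      (ContinuousLinearMap.id ℝ E + (‖x‖⁻¹ • innerSL ℝ x).smulRight h) x :=
  (hasFDerivAt_id x).add ((hasStrictFDerivAt_norm hx).hasFDerivAt.smul_const h)

theorem det_fderiv_radialShear [FiniteDimensional ℝ E] [Nontrivial E] (h : E) {x : E}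
    (hx : x ≠ 0) :
    (ContinuousLinearMap.id ℝ E + (‖x‖⁻¹ • innerSL ℝ x).smulRight h).det =
      1 + ⟪(sphereProj x : E), h⟫_ℝ := by
  simp [ContinuousLinearMap.det_id_add_smulRight, coe_sphereProj hx, real_inner_smul_left]

end RadialShear

section UnitVectorBounds

variable {E : Type*} [NormedAddCommGroup E] [InnerProductSpace ℝ E] {θ h : E}

theorem one_add_inner_pos (hθ : ‖θ‖ = 1) (hh : ‖h‖ < 1) : 0 < 1 + ⟪θ, h⟫_ℝ := by
  have := abs_real_inner_le_norm θ h
  rw [hθ, one_mul] at this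
  linarith [neg_abs_le ⟪θ, h⟫_ℝ]

theorem norm_add_pow_le_of_two_le (hθ : ‖θ‖ = 1) (hh : ‖h‖ ≤ 1) {k : ℕ} (hk : 2 ≤ k) :
    ‖θ + h‖ ^ k ≤ 2 ^ (k - 1) * (1 + ⟪θ, h⟫_ℝ) := by
  have hle : ‖θ + h‖ ≤ 2 := (norm_add_le θ h).trans (by linarith)
  have hsq : ‖θ + h‖ ^ 2 ≤ 2 * (1 + ⟪θ, h⟫_ℝ) := by
    rw [norm_add_sq_real, hθ]
    nlinarith [norm_nonneg h]
  calc ‖θ + h‖ ^ k = ‖θ + h‖ ^ (k - 2) * ‖θ + h‖ ^ 2 := by rw [← pow_add, Nat.sub_add_cancel hk]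
    _ ≤ 2 ^ (k - 2) * (2 * (1 + ⟪θ, h⟫_ℝ)) := by gcongr
    _ = 2 ^ (k - 1) * (1 + ⟪θ, h⟫_ℝ) := by
      rw [← mul_assoc, ← pow_succ, show k - 2 + 1 = k - 1 by omega]

theorem norm_add_eq_one_add_inner_of_finrank_eq_one (hE : finrank ℝ E = 1)
    (hθ : ‖θ‖ = 1) (hh : ‖h‖ ≤ 1) : ‖θ + h‖ = 1 + ⟪θ, h⟫_ℝ := by
  have hθ₀ : θ ≠ 0 := by rintro rfl; simp at hθ
  obtain ⟨c, rfl⟩ := (finrank_eq_one_iff_of_nonzero' θ hθ₀).1 hE h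
  rw [norm_smul, hθ, mul_one, Real.norm_eq_abs] at hh
  rw [show θ + c • θ = (1 + c) • θ by module, norm_smul, hθ, mul_one, Real.norm_eq_abs,
    real_inner_smul_right, real_inner_self_eq_norm_sq, hθ,
    abs_of_nonneg (by linarith [neg_abs_le c])]
  ring

theorem norm_add_pow_finrank_le [FiniteDimensional ℝ E] (hθ : ‖θ‖ = 1) (hh : ‖h‖ ≤ 1) :
    ‖θ + h‖ ^ finrank ℝ E ≤ 2 ^ (finrank ℝ E - 1) * (1 + ⟪θ, h⟫_ℝ) := by
  have : Nontrivial E := ⟨θ, 0, by rintro rfl; simp at hθ⟩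
  obtain hE | hE : finrank ℝ E = 1 ∨ 2 ≤ finrank ℝ E := by
    have := finrank_pos (R := ℝ) (M := E)
    omega
  · rw [hE, pow_one, pow_zero, one_mul]
    exact (norm_add_eq_one_add_inner_of_finrank_eq_one hE hθ hh).le
  · exact norm_add_pow_le_of_two_le hθ hh hE

end UnitVectorBounds

section Translation

variable {E : Type*} [NormedAddCommGroup E] [InnerProductSpace ℝ E] [FiniteDimensional ℝ E]
  [Nontrivial E] [MeasurableSpace E] [BorelSpace E] (μ : Measure E) [μ.IsAddHaarMeasure] {h : E}

theorem lintegral_image_radialShear (hh : ‖h‖ < 1) (g : sphere (0 : E) 1 → ℝ≥0∞) :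
    ∫⁻ y in radialShear h '' {x | x ≠ 0 ∧ ‖x‖ < ‖(sphereProj x : E) + h‖⁻¹},
        g (sphereProj y) ∂μ =
      ∫⁻ x in {x | x ≠ 0 ∧ ‖x‖ < ‖(sphereProj x : E) + h‖⁻¹},
        ENNReal.ofReal (1 + ⟪(sphereProj x : E), h⟫_ℝ) *
          g (sphereProj ((sphereProj x : E) + h)) ∂μ := by
  have hD := measurableSet_ne_zero_and_norm_lt
    (R := fun θ : sphere (0 : E) 1 => ‖(θ : E) + h‖⁻¹) (by fun_prop)
  rw [lintegral_image_eq_lintegral_abs_det_fderiv_mul μ hD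
    (fun x hx => (hasFDerivAt_radialShear h hx.1).hasFDerivWithinAt)
    (injective_radialShear hh).injOn]
  refine setLIntegral_congr_fun hD fun x hx => ?_
  rw [det_fderiv_radialShear h hx.1, abs_of_pos (one_add_inner_pos (norm_eq_of_mem_sphere _) hh),
    sphereProj_radialShear hh hx.1]

theorem lintegral_jacobian_mul_comp_sphereProj_add_le (hh : ‖h‖ < 1)
    {g : sphere (0 : E) 1 → ℝ≥0∞} (hg : Measurable g) :
    ∫⁻ θ, ENNReal.ofReal ((1 + ⟪(θ : E), h⟫_ℝ) / ‖(θ : E) + h‖ ^ finrank ℝ E) *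
        g (sphereProj ((θ : E) + h)) ∂μ.toSphere ≤ ∫⁻ θ, g θ ∂μ.toSphere := by
  set d := finrank ℝ E
  have hd : ENNReal.ofReal (d : ℝ)⁻¹ ≠ 0 := by simpa [d] using finrank_pos.ne'
  have hsum (θ : sphere (0 : E) 1) : 0 < ‖(θ : E) + h‖ :=
    norm_pos_iff.2 (add_ne_zero_of_norm_lt (norm_eq_of_mem_sphere θ) hh)
  set G : sphere (0 : E) 1 → ℝ≥0∞ := fun θ =>
    ENNReal.ofReal (1 + ⟪(θ : E), h⟫_ℝ) * g (sphereProj ((θ : E) + h))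
  have hG : Measurable G := (by fun_prop : Measurable fun θ : sphere (0 : E) 1 =>
      ENNReal.ofReal (1 + ⟪(θ : E), h⟫_ℝ)).mul (hg.comp (measurable_sphereProj_add h))
  have hweight (θ : sphere (0 : E) 1) :
      ENNReal.ofReal ((1 + ⟪(θ : E), h⟫_ℝ) / ‖(θ : E) + h‖ ^ d) * g (sphereProj ((θ : E) + h)) *
        ENNReal.ofReal (d : ℝ)⁻¹ = G θ * ENNReal.ofReal (‖(θ : E) + h‖⁻¹ ^ d / d) := by
    have ht := one_add_inner_pos (norm_eq_of_mem_sphere θ) hh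
    have := hsum θ
    rw [mul_right_comm, ← ENNReal.ofReal_mul (by positivity), mul_right_comm (ENNReal.ofReal _),
      ← ENNReal.ofReal_mul ht.le, inv_pow]
    ring_nf
  rw [← ENNReal.mul_le_mul_iff_left hd ENNReal.ofReal_ne_top]
  calc (∫⁻ θ, ENNReal.ofReal ((1 + ⟪(θ : E), h⟫_ℝ) / ‖(θ : E) + h‖ ^ d) *
        g (sphereProj ((θ : E) + h)) ∂μ.toSphere) * ENNReal.ofReal (d : ℝ)⁻¹
      = ∫⁻ θ, G θ * ENNReal.ofReal (‖(θ : E) + h‖⁻¹ ^ d / d) ∂μ.toSphere := by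
        rw [← lintegral_mul_const' _ _ ENNReal.ofReal_ne_top]
        exact lintegral_congr hweight
    _ = ∫⁻ x in {x | x ≠ 0 ∧ ‖x‖ < ‖(sphereProj x : E) + h‖⁻¹}, G (sphereProj x) ∂μ :=
        (lintegral_sphereProj_of_norm_lt μ (by fun_prop) (fun θ => inv_pos.2 (hsum θ)) hG).symm
    _ = ∫⁻ y in radialShear h '' {x | x ≠ 0 ∧ ‖x‖ < ‖(sphereProj x : E) + h‖⁻¹},
          g (sphereProj y) ∂μ := (lintegral_image_radialShear μ hh g).symm
    _ ≤ ∫⁻ y in {y | y ≠ 0 ∧ ‖y‖ < 1}, g (sphereProj y) ∂μ :=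
        lintegral_mono_set (radialShear_image_subset hh)
    _ = ∫⁻ θ, g θ * ENNReal.ofReal (1 ^ d / d) ∂μ.toSphere :=
        lintegral_sphereProj_of_norm_lt μ measurable_const (fun _ => one_pos) hg
    _ = (∫⁻ θ, g θ ∂μ.toSphere) * ENNReal.ofReal (d : ℝ)⁻¹ := by
        rw [lintegral_mul_const' _ _ ENNReal.ofReal_ne_top, one_pow, one_div]

theorem lintegral_comp_sphereProj_add_le (hh : ‖h‖ < 1) {g : sphere (0 : E) 1 → ℝ≥0∞}
    (hg : Measurable g) :
    ∫⁻ θ, g (sphereProj ((θ : E) + h)) ∂μ.toSphere ≤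
      2 ^ (finrank ℝ E - 1) * ∫⁻ θ, g θ ∂μ.toSphere := by
  set J : sphere (0 : E) 1 → ℝ := fun θ => (1 + ⟪(θ : E), h⟫_ℝ) / ‖(θ : E) + h‖ ^ finrank ℝ E
  have hJ (θ : sphere (0 : E) 1) : 1 ≤ (2 : ℝ≥0∞) ^ (finrank ℝ E - 1) * ENNReal.ofReal (J θ) := by
    have hθ := norm_eq_of_mem_sphere θ
    have hsum := norm_pos_iff.2 (add_ne_zero_of_norm_lt hθ hh)
    rw [← ENNReal.ofReal_ofNat, ← ENNReal.ofReal_pow zero_le_two,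
      ← ENNReal.ofReal_mul (by positivity), ENNReal.one_le_ofReal, mul_div_assoc',
      le_div_iff₀ (by positivity), one_mul]
    exact norm_add_pow_finrank_le hθ hh.le
  calc ∫⁻ θ, g (sphereProj ((θ : E) + h)) ∂μ.toSphere
      ≤ ∫⁻ θ, 2 ^ (finrank ℝ E - 1) *
          (ENNReal.ofReal (J θ) * g (sphereProj ((θ : E) + h))) ∂μ.toSphere := by
        refine lintegral_mono fun θ => ?_
        rw [← mul_assoc]
        exact le_mul_of_one_le_left zero_le (hJ θ)
    _ ≤ _ := by
        rw [lintegral_const_mul' _ _ (by simp)]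
        exact mul_le_mul_right (lintegral_jacobian_mul_comp_sphereProj_add_le μ hh hg) _

theorem map_sphereProj_add_le (hh : ‖h‖ < 1) :
    μ.toSphere.map (fun θ : sphere (0 : E) 1 => sphereProj ((θ : E) + h)) ≤
      (2 : ℝ≥0∞) ^ (finrank ℝ E - 1) • μ.toSphere := by
  refine Measure.le_iff.2 fun s hs => ?_
  rw [Measure.map_apply (measurable_sphereProj_add h) hs, Measure.smul_apply, smul_eq_mul,
    ← lintegral_indicator_one hs, ← lintegral_indicator_one (measurable_sphereProj_add h hs)]
  exact lintegral_comp_sphereProj_add_le μ hh (measurable_const.indicator hs)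

theorem integral_abs_comp_sphereProj_add_le (hh : ‖h‖ < 1) {f : sphere (0 : E) 1 → ℝ}
    (hf : Integrable f μ.toSphere) :
    ∫ θ, |f (sphereProj ((θ : E) + h))| ∂μ.toSphere ≤
      2 ^ (finrank ℝ E - 1) * ∫ θ, |f θ| ∂μ.toSphere := by
  have hmap := map_sphereProj_add_le μ hh
  calc ∫ θ, |f (sphereProj ((θ : E) + h))| ∂μ.toSphere
      = ∫ θ, |f θ| ∂μ.toSphere.map (fun θ : sphere (0 : E) 1 => sphereProj ((θ : E) + h)) :=
        (integral_map (measurable_sphereProj_add h).aemeasurable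
          (hf.abs.1.mono_ac (Measure.absolutelyContinuous_of_le_smul hmap))).symm
    _ ≤ ∫ θ, |f θ| ∂((2 : ℝ≥0∞) ^ (finrank ℝ E - 1) • μ.toSphere) :=
        integral_mono_measure hmap (ae_of_all _ fun _ => abs_nonneg _)
          (hf.abs.smul_measure (by simp))
    _ = _ := by simp [integral_smul_measure]

end Translation

theorem HomogeneousZero.apply_sphereProj {n : ℕ} [Nontrivial (EuclideanSpace ℝ (Fin n))]
    {Ω : EuclideanSpace ℝ (Fin n) → ℝ} (hΩ : HomogeneousZero Ω) {x : EuclideanSpace ℝ (Fin n)}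
    (hx : x ≠ 0) : Ω (sphereProj x) = Ω x := by
  conv_rhs => rw [← norm_smul_sphereProj x]
  exact (hΩ _ (norm_pos_iff.2 hx) _ (ne_zero_of_mem_unit_sphere _)).symm

/-- For `Ω` homogeneous of degree zero with `Ω ∈ L¹(S^{n-1})` and every
`h` with `0 < |h| < 1`, one has
`∫_{S^{n-1}} |Ω((x+h)/|x+h|)| dσ(x) ≤ 2^{n-1} ∫_{S^{n-1}} |Ω(x)| dσ(x)`; consequently
`sup_{|h|≤δ} ∫_{S^{n-1}} |Ω(θ+h)| dσ(θ) ≤ 2^{n-1} ‖Ω‖_{L¹(S^{n-1})}` for every `0 < δ < 1`. -/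
theorem translated_L1_norm_bound
    {n : ℕ} (hn : 0 < n) (Ω : EuclideanSpace ℝ (Fin n) → ℝ)
    (hhom : HomogeneousZero Ω)
    (hint : Integrable (fun θ : unitSphere n => Ω (θ : EuclideanSpace ℝ (Fin n)))
      (sphereMeasure n)) :
    (∀ h : EuclideanSpace ℝ (Fin n), 0 < ‖h‖ → ‖h‖ < 1 →
      (∫ x : unitSphere n,
          |Ω (‖(x : EuclideanSpace ℝ (Fin n)) + h‖⁻¹ • ((x : EuclideanSpace ℝ (Fin n)) + h))|
          ∂(sphereMeasure n)) ≤
        2 ^ (n - 1) *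
          ∫ x : unitSphere n, |Ω (x : EuclideanSpace ℝ (Fin n))| ∂(sphereMeasure n)) ∧
    (∀ δ : ℝ, 0 < δ → δ < 1 →
      sSup {I : ℝ | ∃ h : EuclideanSpace ℝ (Fin n), ‖h‖ ≤ δ ∧
          I = ∫ θ : unitSphere n, |Ω ((θ : EuclideanSpace ℝ (Fin n)) + h)| ∂(sphereMeasure n)} ≤
        2 ^ (n - 1) *
          ∫ θ : unitSphere n, |Ω (θ : EuclideanSpace ℝ (Fin n))| ∂(sphereMeasure n)) := by
  have : Nontrivial (EuclideanSpace ℝ (Fin n)) :=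
    Module.nontrivial_of_finrank_pos (R := ℝ) (by rwa [finrank_euclideanSpace_fin])
  have hsum {h : EuclideanSpace ℝ (Fin n)} (hh : ‖h‖ < 1) (θ : unitSphere n) :=
    add_ne_zero_of_norm_lt (norm_eq_of_mem_sphere θ) hh
  have key {h : EuclideanSpace ℝ (Fin n)} (hh : ‖h‖ < 1) :
      ∫ θ : unitSphere n, |Ω (sphereProj ((θ : EuclideanSpace ℝ (Fin n)) + h))| ∂sphereMeasure n ≤
        2 ^ (n - 1) * ∫ θ : unitSphere n, |Ω θ| ∂sphereMeasure n := by
    simpa [sphereMeasure, finrank_euclideanSpace_fin] using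
      integral_abs_comp_sphereProj_add_le volume hh hint
  refine ⟨fun h _ hh => ?_, fun δ _ hδ => Real.sSup_le ?_ (by positivity)⟩
  · simpa only [coe_sphereProj (hsum hh _)] using key hh
  · rintro _ ⟨h, hhδ, rfl⟩
    simpa only [hhom.apply_sphereProj (hsum (hhδ.trans_lt hδ) _)] using key (hhδ.trans_lt hδ)
end
end
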